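/- If G is a graph with two vertices u, v (u ≠ v) such that deg(u) = deg(v) = 1 and dist(u,v) ≤ 2, then b(G) ≤ 1, i.e., removing a single edge increases the domination number. -/
import Mathlib


open SimpleGraph

section Defs
variable {V : Type*}

/-- `S` is a dominating set of `G`. -/
def Dominates (G : SimpleGraph V) (S : Set V) : Prop :=
  ∀ v : V, v ∈ S ∨ ∃ u ∈ S, G.Adj u v

/-- The domination number `γ(G)`. -/
noncomputable def domNum (G : SimpleGraph V) [Fintype V] : ℕ :=
  sInf {n | ∃ S : Finset V, S.card = n ∧ Dominates G ↑S}

/-- The bondage number `b(G)`. -/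
noncomputable def bondageNum (G : SimpleGraph V) [Fintype V] : ℕ :=
  sInf {n | ∃ A : Finset (Sym2 V), ↑A ⊆ G.edgeSet ∧ A.card = n ∧
    domNum (G.deleteEdges ↑A) = domNum G + 1}

/-- The clique number `ω(G)`. -/
noncomputable def cliqueNum' (G : SimpleGraph V) [Fintype V] : ℕ :=
  sSup {n | ∃ s : Finset V, G.IsNClique n s}

/-- The degree of a vertex. -/
noncomputable def vdeg (G : SimpleGraph V) (v : V) : ℕ := (G.neighborSet v).ncard

/-- The maximum degree `Δ(G)`. -/
noncomputable def maxDeg (G : SimpleGraph V) [Fintype V] : ℕ :=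
  sSup {d | ∃ v, vdeg G v = d}

/-- A chordal graph: no induced cycle of length at least 4. -/
def Chordal (G : SimpleGraph V) : Prop :=
  ∀ n, 4 ≤ n → IsEmpty (cycleGraph n ↪g G)

/-- The corona `G ∘ K₁`: attach a pendant vertex to each vertex of `G`. -/
def coronaK1 (G : SimpleGraph V) : SimpleGraph (V ⊕ V) :=
  SimpleGraph.fromRel (fun a b =>
    (∃ u v, a = Sum.inl u ∧ b = Sum.inl v ∧ G.Adj u v) ∨
    (∃ u, a = Sum.inl u ∧ b = Sum.inr u))

end Defs

set_option linter.unusedSectionVars false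

section Aux
variable {V : Type*} [Fintype V]

lemma domNum_exists (G : SimpleGraph V) :
    ∃ S : Finset V, S.card = domNum G ∧ Dominates G ↑S := by
  have hne : {n | ∃ S : Finset V, S.card = n ∧ Dominates G ↑S}.Nonempty :=
    ⟨Finset.univ.card, Finset.univ, rfl, fun x => Or.inl (by simp)⟩
  obtain ⟨S, hS, hdom⟩ := Nat.sInf_mem hne
  exact ⟨S, hS, hdom⟩

lemma domNum_le (G : SimpleGraph V) (S : Finset V) (h : Dominates G ↑S) :
    domNum G ≤ S.card := Nat.sInf_le ⟨S, rfl, h⟩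

/-- Deleting the unique edge at a leaf `u` raises the domination number by at most 1. -/
lemma claimA (G : SimpleGraph V) (u w : V) (hNu : G.neighborSet u = {w}) :
    domNum (G.deleteEdges {s(u, w)}) ≤ domNum G + 1 := by
  classical
  obtain ⟨S, hScard, hSdom⟩ := domNum_exists G
  have hAdjU : ∀ x, G.Adj u x ↔ x = w := by
    intro x
    rw [← SimpleGraph.mem_neighborSet, hNu, Set.mem_singleton_iff]
  by_cases hus : u ∈ S
  · -- use S ∪ {w}
    have hdom : Dominates (G.deleteEdges {s(u, w)}) ↑(insert w S) := by
      intro x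
      rcases hSdom x with hx | ⟨s, hs, hadj⟩
      · exact Or.inl (by simpa using Or.inr hx)
      · by_cases hx : x = u
        · subst hx; exact Or.inl (by simpa using Or.inr hus)
        by_cases hsu : s = u
        · subst hsu
          have hxw : x = w := (hAdjU x).mp hadj
          subst hxw
          exact Or.inl (by simp)
        · refine Or.inr ⟨s, by simp [hs], ?_⟩
          rw [SimpleGraph.deleteEdges_adj]
          refine ⟨hadj, ?_⟩
          simp only [Set.mem_singleton_iff, Sym2.eq_iff]
          rintro (⟨rfl, rfl⟩ | ⟨rfl, rfl⟩)
          · exact hsu rfl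
          · exact hx rfl
    calc domNum (G.deleteEdges {s(u, w)}) ≤ (insert w S).card := domNum_le _ _ hdom
      _ ≤ S.card + 1 := Finset.card_insert_le _ _
      _ = domNum G + 1 := by rw [hScard]
  · -- use S ∪ {u}
    have hdom : Dominates (G.deleteEdges {s(u, w)}) ↑(insert u S) := by
      intro x
      by_cases hx : x = u
      · exact Or.inl (by simp [hx])
      rcases hSdom x with hxS | ⟨s, hs, hadj⟩
      · exact Or.inl (by simpa using Or.inr hxS)
      · have hsu : s ≠ u := fun h => hus (h ▸ hs)
        refine Or.inr ⟨s, by simp [hs], ?_⟩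
        rw [SimpleGraph.deleteEdges_adj]
        refine ⟨hadj, ?_⟩
        simp only [Set.mem_singleton_iff, Sym2.eq_iff]
        rintro (⟨rfl, rfl⟩ | ⟨rfl, rfl⟩)
        · exact hsu rfl
        · exact hx rfl
    calc domNum (G.deleteEdges {s(u, w)}) ≤ (insert u S).card := domNum_le _ _ hdom
      _ ≤ S.card + 1 := Finset.card_insert_le _ _
      _ = domNum G + 1 := by rw [hScard]

lemma isolated_mem (H : SimpleGraph V) (u : V) (hiso : ∀ x, ¬ H.Adj x u)
    (S : Finset V) (h : Dominates H ↑S) : u ∈ S := by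
  rcases h u with hx | ⟨s, hs, hadj⟩
  · exact_mod_cast hx
  · exact absurd hadj (hiso s)

/-- Case dist = 1 : u, v adjacent leaves. -/
lemma claimB1 (G : SimpleGraph V) (u v : V) (huv : u ≠ v)
    (hNu : G.neighborSet u = {v}) (hNv : G.neighborSet v = {u}) :
    domNum G + 1 ≤ domNum (G.deleteEdges {s(u, v)}) := by
  classical
  set H := G.deleteEdges {s(u, v)} with hH
  obtain ⟨S, hScard, hSdom⟩ := domNum_exists H
  have hAdjU : ∀ x, G.Adj u x ↔ x = v := by
    intro x; rw [← SimpleGraph.mem_neighborSet, hNu, Set.mem_singleton_iff]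
  have hAdjV : ∀ x, G.Adj v x ↔ x = u := by
    intro x; rw [← SimpleGraph.mem_neighborSet, hNv, Set.mem_singleton_iff]
  have hiso : ∀ x, ¬ H.Adj x v := by
    intro x hx
    rw [hH, SimpleGraph.deleteEdges_adj] at hx
    have := (hAdjV x).mp hx.1.symm
    exact hx.2 (by simp [this])
  have hisoU : ∀ x, ¬ H.Adj x u := by
    intro x hx
    rw [hH, SimpleGraph.deleteEdges_adj] at hx
    have := (hAdjU x).mp hx.1.symm
    exact hx.2 (by simp [this])
  have hvS : v ∈ S := isolated_mem H v hiso S hSdom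
  have huS : u ∈ S := isolated_mem H u hisoU S hSdom
  have hdom : Dominates G ↑(S.erase v) := by
    intro x
    by_cases hx : x = v
    · subst hx
      refine Or.inr ⟨u, ?_, (hAdjU x).mpr rfl⟩
      exact Finset.mem_coe.mpr (Finset.mem_erase.mpr ⟨huv, huS⟩)
    rcases hSdom x with hxS | ⟨s, hs, hadj⟩
    · exact Or.inl (Finset.mem_coe.mpr (Finset.mem_erase.mpr ⟨hx, Finset.mem_coe.mp hxS⟩))
    · have hsv : s ≠ v := fun h => hiso x (h ▸ hadj).symm
      refine Or.inr ⟨s, ?_, (SimpleGraph.deleteEdges_adj.mp hadj).1⟩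
      exact Finset.mem_coe.mpr (Finset.mem_erase.mpr ⟨hsv, Finset.mem_coe.mp hs⟩)
  have h1 : domNum G ≤ (S.erase v).card := domNum_le _ _ hdom
  have h2 : (S.erase v).card = S.card - 1 := Finset.card_erase_of_mem hvS
  have h3 : 1 ≤ S.card := Finset.card_pos.mpr ⟨v, hvS⟩
  omega

/-- Case dist = 2 : leaves u, v with common neighbor w. -/
lemma claimB2 (G : SimpleGraph V) (u v w : V) (huv : u ≠ v)
    (hNu : G.neighborSet u = {w}) (hNv : G.neighborSet v = {w}) :
    domNum G + 1 ≤ domNum (G.deleteEdges {s(u, w)}) := by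
  classical
  set H := G.deleteEdges {s(u, w)} with hH
  obtain ⟨S, hScard, hSdom⟩ := domNum_exists H
  have hAdjU : ∀ x, G.Adj u x ↔ x = w := by
    intro x; rw [← SimpleGraph.mem_neighborSet, hNu, Set.mem_singleton_iff]
  have hAdjV : ∀ x, G.Adj v x ↔ x = w := by
    intro x; rw [← SimpleGraph.mem_neighborSet, hNv, Set.mem_singleton_iff]
  have huw : G.Adj u w := (hAdjU w).mpr rfl
  have hvw : G.Adj v w := (hAdjV w).mpr rfl
  have hisoU : ∀ x, ¬ H.Adj x u := by
    intro x hx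
    rw [hH, SimpleGraph.deleteEdges_adj] at hx
    have := (hAdjU x).mp hx.1.symm
    exact hx.2 (by simp [this])
  have huS : u ∈ S := isolated_mem H u hisoU S hSdom
  set T : Finset V := insert w ((S.erase u).erase v) with hT
  have hwT : w ∈ T := Finset.mem_insert_self _ _
  have hdom : Dominates G ↑T := by
    intro x
    by_cases hxu : x = u
    · exact Or.inr ⟨w, Finset.mem_coe.mpr hwT, hxu ▸ huw.symm⟩
    by_cases hxv : x = v
    · exact Or.inr ⟨w, Finset.mem_coe.mpr hwT, hxv ▸ hvw.symm⟩
    rcases hSdom x with hxS | ⟨s, hs, hadj⟩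
    · refine Or.inl (Finset.mem_coe.mpr ?_)
      exact Finset.mem_insert_of_mem (Finset.mem_erase.mpr ⟨hxv,
        Finset.mem_erase.mpr ⟨hxu, Finset.mem_coe.mp hxS⟩⟩)
    · have hGadj : G.Adj s x := (SimpleGraph.deleteEdges_adj.mp hadj).1
      have hsu : s ≠ u := fun h => hisoU x (h ▸ hadj).symm
      by_cases hsv : s = v
      · have hxw : x = w := (hAdjV x).mp (hsv ▸ hGadj)
        exact Or.inl (Finset.mem_coe.mpr (hxw ▸ hwT))
      · refine Or.inr ⟨s, Finset.mem_coe.mpr ?_, hGadj⟩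
        exact Finset.mem_insert_of_mem (Finset.mem_erase.mpr ⟨hsv,
          Finset.mem_erase.mpr ⟨hsu, Finset.mem_coe.mp hs⟩⟩)
  have h1 : domNum G ≤ T.card := domNum_le _ _ hdom
  have hcard : T.card ≤ S.card - 1 := by
    by_cases hvS : v ∈ S
    · have e1 : ((S.erase u).erase v).card = S.card - 2 := by
        rw [Finset.card_erase_of_mem (Finset.mem_erase.mpr ⟨huv.symm, hvS⟩),
          Finset.card_erase_of_mem huS]
        omega
      have e2 := Finset.card_insert_le w ((S.erase u).erase v)
      have h3 : 2 ≤ S.card := Finset.one_lt_card.mpr ⟨u, huS, v, hvS, fun h => huv h⟩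
      rw [hT]
      omega
    · have hwS : w ∈ S := by
        rcases hSdom v with hvS' | ⟨s, hs, hadj⟩
        · exact absurd (Finset.mem_coe.mp hvS') hvS
        · have hGadj : G.Adj s v := (SimpleGraph.deleteEdges_adj.mp hadj).1
          have : s = w := (hAdjV s).mp hGadj.symm
          exact this ▸ Finset.mem_coe.mp hs
      have hwu : w ≠ u := huw.ne'
      have hwv : w ≠ v := hvw.ne'
      have hTe : T = (S.erase u).erase v := by
        rw [hT, Finset.insert_eq_self]
        exact Finset.mem_erase.mpr ⟨hwv, Finset.mem_erase.mpr ⟨hwu, hwS⟩⟩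
      rw [hTe]
      calc ((S.erase u).erase v).card ≤ (S.erase u).card := Finset.card_erase_le
        _ = S.card - 1 := Finset.card_erase_of_mem huS
  have h3 : 1 ≤ S.card := Finset.card_pos.mpr ⟨u, huS⟩
  omega

end Aux

/-- two distinct degree-one vertices at distance at most 2 force `b(G) ≤ 1`. -/
theorem bondage_le_one_of_two_leaves (V : Type*) [Fintype V] (G : SimpleGraph V)
    (u v : V) (huv : u ≠ v) (hu : vdeg G u = 1) (hv : vdeg G v = 1)
    (hr : G.Reachable u v) (hd : G.dist u v ≤ 2) :
    bondageNum G ≤ 1 := by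
  classical
  obtain ⟨w, hNu⟩ := Set.ncard_eq_one.mp hu
  obtain ⟨w', hNv⟩ := Set.ncard_eq_one.mp hv
  have hAdjU : ∀ x, G.Adj u x ↔ x = w := by
    intro x; rw [← SimpleGraph.mem_neighborSet, hNu, Set.mem_singleton_iff]
  have hAdjV : ∀ x, G.Adj v x ↔ x = w' := by
    intro x; rw [← SimpleGraph.mem_neighborSet, hNv, Set.mem_singleton_iff]
  have huw : G.Adj u w := (hAdjU w).mpr rfl
  obtain ⟨p, hp⟩ := hr.exists_walk_length_eq_dist
  have hd0 : G.dist u v ≠ 0 := fun h => huv (hr.dist_eq_zero_iff.mp h)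
  have hB : domNum G + 1 ≤ domNum (G.deleteEdges {s(u, w)}) := by
    rcases (by omega : G.dist u v = 1 ∨ G.dist u v = 2) with h1 | h2
    · -- adjacent case
      have huv' : G.Adj u v := by
        have := p.adj_getVert_succ (by rw [hp, h1]; omega : 0 < p.length)
        rwa [p.getVert_zero, show p.getVert (0 + 1) = v by
          rw [show (0 + 1 : ℕ) = p.length by omega, p.getVert_length]] at this
      have hwv : w = v := ((hAdjU v).mp huv').symm
      subst hwv
      have hNv' : G.neighborSet w = {u} := by
        have : u = w' := (hAdjV u).mp huv'.symm
        rw [hNv, ← this]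
      exact claimB1 G u w huv hNu hNv'
    · -- distance 2 case
      set b := p.getVert 1 with hb
      have hub : G.Adj u b := by
        have := p.adj_getVert_succ (by rw [hp, h2]; omega : 0 < p.length)
        rwa [p.getVert_zero] at this
      have hbv : G.Adj b v := by
        have := p.adj_getVert_succ (by rw [hp, h2]; omega : 1 < p.length)
        rwa [show p.getVert (1 + 1) = v by
          rw [show (1 + 1 : ℕ) = p.length by omega, p.getVert_length]] at this
      have hbw : b = w := (hAdjU b).mp hub
      have hw'b : w' = b := ((hAdjV b).mp hbv.symm).symm
      have hNv' : G.neighborSet v = {w} := by rw [hNv, hw'b, hbw]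
      exact claimB2 G u v w huv hNu hNv'
  have hA := claimA G u w hNu
  have hkey : domNum (G.deleteEdges {s(u, w)}) = domNum G + 1 := by omega
  refine Nat.sInf_le ⟨{s(u, w)}, ?_, by simp, by simpa using hkey⟩
  intro e he
  simp only [Finset.coe_singleton, Set.mem_singleton_iff] at he
  subst he
  exact huw
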